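/- arXiv:1310.0359 — 5 statements merged into one kernel-verified Lean document; each statement's English description precedes it below -/
import Mathlib

section
/- Suppose a(b f) − b(a f) = f for all f ∈ D, a φ₀ = 0 for some φ₀ ∈ D, and let Θ : D → D be a linear map that is symmetric (⟨Θ f, g⟩ = ⟨f, Θ g⟩ for all f, g ∈ D) and satisfies Θ(a f) = b†(Θ f) for all f ∈ D. Set Ψ₀ := Θ φ₀, φₙ := (1/√(n!)) bⁿ φ₀ and Ψₙ := (1/√(n!)) (a†)ⁿ Ψ₀. Then b† Ψ₀ = 0 and Θ φₙ = Ψₙ for every n ≥ 0. -/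
/-!
Moving `b` across the inner product turns it into `b†`, the intertwining relation turns `b† Θ`
into `Θ a`, and moving `a` back turns it into `a†`; by density of `D` this gives `Θ b = a† Θ`.
Iterating, `Θ bⁿ = (a†)ⁿ Θ`, which applied to `φ₀` and rescaled is `Θ φₙ = Ψₙ`, while
`b† Ψ₀ = Θ (a φ₀) = 0`.
-/

section FormalAdjoint

variable {𝕜 H : Type*} [RCLike 𝕜] [NormedAddCommGroup H] [InnerProductSpace 𝕜 H]
  {D : Submodule 𝕜 H}

theorem inner_apply_eq_inner_formalAdjoint_apply {a adjA : D →ₗ[𝕜] D}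
    (ha : ∀ f g : D, inner 𝕜 (a f : H) (g : H) = inner 𝕜 (f : H) (adjA g : H)) (f g : D) :
    inner 𝕜 (f : H) (a g : H) = inner 𝕜 (adjA f : H) (g : H) := by
  rw [← inner_conj_symm, ha, inner_conj_symm]

theorem semiconjBy_formalAdjoint_of_symmetric (hdense : Dense (D : Set H))
    {a b adjA adjB Θ : D →ₗ[𝕜] D}
    (ha : ∀ f g : D, inner 𝕜 (a f : H) (g : H) = inner 𝕜 (f : H) (adjA g : H))
    (hb : ∀ f g : D, inner 𝕜 (b f : H) (g : H) = inner 𝕜 (f : H) (adjB g : H))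
    (hΘsym : ∀ f g : D, inner 𝕜 (Θ f : H) (g : H) = inner 𝕜 (f : H) (Θ g : H))
    (hΘconj : ∀ f : D, Θ (a f) = adjB (Θ f)) :
    SemiconjBy Θ b adjA := by
  refine LinearMap.ext fun f => Subtype.ext <| hdense.eq_of_inner_left 𝕜 fun v hv => ?_
  let g : D := ⟨v, hv⟩
  calc inner 𝕜 (Θ (b f) : H) (g : H)
      = inner 𝕜 (f : H) (adjB (Θ g) : H) := by rw [hΘsym, hb]
    _ = inner 𝕜 (f : H) (Θ (a g) : H) := by rw [hΘconj]
    _ = inner 𝕜 (adjA (Θ f) : H) (g : H) := by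
      rw [← hΘsym, inner_apply_eq_inner_formalAdjoint_apply ha]

end FormalAdjoint

theorem theta_conjugate_maps_phi_to_psi_general
    {H : Type*} [NormedAddCommGroup H] [InnerProductSpace ℂ H]
    (D : Submodule ℂ H) (hdense : Dense (D : Set H))
    (a b adjA adjB : D →ₗ[ℂ] D)
    (ha : ∀ f g : D, (inner ℂ ((a f : H)) (g : H) : ℂ) = inner ℂ (f : H) ((adjA g : H)))
    (hb : ∀ f g : D, (inner ℂ ((b f : H)) (g : H) : ℂ) = inner ℂ (f : H) ((adjB g : H)))
    (φ₀ : D) (hφ0 : a φ₀ = 0)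
    (Θ : D →ₗ[ℂ] D)
    (hΘsym : ∀ f g : D, (inner ℂ ((Θ f : H)) (g : H) : ℂ) = inner ℂ (f : H) ((Θ g : H)))
    (hΘconj : ∀ f : D, Θ (a f) = adjB (Θ f))
    (Ψ₀ : D) (hΨ0def : Ψ₀ = Θ φ₀)
    (φ Ψ : ℕ → D)
    (hφ : ∀ n : ℕ, φ n = ((1 / Real.sqrt n.factorial : ℝ) : ℂ) • (b ^ n) φ₀)
    (hΨ : ∀ n : ℕ, Ψ n = ((1 / Real.sqrt n.factorial : ℝ) : ℂ) • (adjA ^ n) Ψ₀) :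
    adjB Ψ₀ = 0 ∧ ∀ n : ℕ, Θ (φ n) = Ψ n := by
  refine ⟨by rw [hΨ0def, ← hΘconj, hφ0, map_zero], fun n => ?_⟩
  have hpow : Θ * b ^ n = adjA ^ n * Θ :=
    (semiconjBy_formalAdjoint_of_symmetric hdense ha hb hΘsym hΘconj).pow_right n
  rw [hφ, hΨ, map_smul, hΨ0def, ← Module.End.mul_apply, hpow, Module.End.mul_apply]

/-- If `a, b` satisfy `[a,b] = 1` on `D`, `a φ₀ = 0`, and the
symmetric linear map `Θ : D → D` satisfies `Θ a = b† Θ` on `D`, then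
`Ψ₀ := Θ φ₀` satisfies `b† Ψ₀ = 0`, and `Θ φₙ = Ψₙ` for all `n`, where
`φₙ = (1/√(n!)) bⁿ φ₀` and `Ψₙ = (1/√(n!)) (a†)ⁿ Ψ₀`. -/
theorem theta_conjugate_maps_phi_to_psi
    {H : Type*} [NormedAddCommGroup H] [InnerProductSpace ℂ H] [CompleteSpace H]
    (D : Submodule ℂ H) (hdense : Dense (D : Set H))
    (a b adjA adjB : D →ₗ[ℂ] D)
    (ha : ∀ f g : D, (inner ℂ ((a f : H)) (g : H) : ℂ) = inner ℂ (f : H) ((adjA g : H)))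
    (hb : ∀ f g : D, (inner ℂ ((b f : H)) (g : H) : ℂ) = inner ℂ (f : H) ((adjB g : H)))
    (hab : ∀ f : D, a (b f) - b (a f) = f)
    (φ₀ : D) (hφ0 : a φ₀ = 0)
    (Θ : D →ₗ[ℂ] D)
    (hΘsym : ∀ f g : D, (inner ℂ ((Θ f : H)) (g : H) : ℂ) = inner ℂ (f : H) ((Θ g : H)))
    (hΘconj : ∀ f : D, Θ (a f) = adjB (Θ f))
    (Ψ₀ : D) (hΨ0def : Ψ₀ = Θ φ₀)
    (φ Ψ : ℕ → D)
    (hφ : ∀ n : ℕ, φ n = ((1 / Real.sqrt n.factorial : ℝ) : ℂ) • (b ^ n) φ₀)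
    (hΨ : ∀ n : ℕ, Ψ n = ((1 / Real.sqrt n.factorial : ℝ) : ℂ) • (adjA ^ n) Ψ₀) :
    adjB Ψ₀ = 0 ∧ ∀ n : ℕ, Θ (φ n) = Ψ n :=
  theta_conjugate_maps_phi_to_psi_general D hdense a b adjA adjB ha hb φ₀ hφ0 Θ hΘsym hΘconj Ψ₀
    hΨ0def φ Ψ hφ hΨ
end

section
/- Let H be a complex Hilbert space, G ⊆ H a dense subspace, and (φₙ)ₙ∈ℕ, (Ψₙ)ₙ∈ℕ sequences in G which are G-quasi bases, i.e. ⟨f, g⟩ = ∑ₙ ⟨f, Ψₙ⟩⟨φₙ, g⟩ = ∑ₙ ⟨f, φₙ⟩⟨Ψₙ, g⟩ for all f, g ∈ G. Let Θ : G → H be a linear map that is symmetric (⟨Θ f, g⟩ = ⟨f, Θ g⟩ for all f, g ∈ G) and satisfies Ψₙ = Θ φₙ for all n. Then for every nonzero f ∈ G with Θ f ∈ G, the inner product ⟨f, Θ f⟩ is a strictly positive real number. -/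
/-!
On the domain `{f ∈ G | Θ f ∈ G}` the quasi-basis identity and `Θ φₙ = Ψₙ` give
`⟨f, Θ f⟩ = ∑ₙ |⟨f, Ψₙ⟩|² ≥ 0`, so `(f, g) ↦ ⟨f, Θ g⟩` is a positive semidefinite Hermitian
form there. If `⟨f, Θ f⟩ = 0`, Cauchy–Schwarz for this form gives `⟨f, Ψₙ⟩ = ⟨f, Θ φₙ⟩ = 0`
for every `n`, so `f ⟂ G` by the quasi-basis identity and `f = 0` by density. The series is not
known to be summable, so its vanishing alone (`tsum` is `0` on divergent series) would not force
its terms to vanish.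
-/

namespace PreInnerProductSpace.Core

variable {𝕜 F : Type*} [RCLike 𝕜] [AddCommGroup F] [Module 𝕜 F]

theorem inner_eq_zero_of_inner_self_eq_zero (c : PreInnerProductSpace.Core 𝕜 F) {x : F}
    (hx : c.inner x x = 0) (y : F) : c.inner x y = 0 := by
  have hcs := InnerProductSpace.Core.inner_mul_inner_self_le (c := c) x y
  rw [InnerProductSpace.Core.norm_inner_symm (c := c) y x] at hcs
  change ‖c.inner x y‖ * ‖c.inner x y‖ ≤ RCLike.re (c.inner x x) * _ at hcs
  rw [hx, map_zero, zero_mul] at hcs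
  exact norm_eq_zero.1 (mul_self_eq_zero.1 (hcs.antisymm (mul_self_nonneg _)))

end PreInnerProductSpace.Core

namespace LinearMap

variable {H : Type*} [NormedAddCommGroup H] [InnerProductSpace ℂ H] {G : Submodule ℂ H}
  {Θ : G →ₗ[ℂ] H}

noncomputable abbrev symmFormCore
    (hsymm : ∀ f g : G, inner ℂ (Θ f) (g : H) = inner ℂ (f : H) (Θ g))
    (hpos : ∀ f : G, Θ f ∈ G → 0 ≤ (inner ℂ (f : H) (Θ f)).re) :
    PreInnerProductSpace.Core ℂ (G.comap Θ) where
  inner f g := inner ℂ (f : H) (Θ g)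
  conj_inner_symm f g := by rw [inner_conj_symm]; exact hsymm f g
  re_inner_nonneg f := hpos f f.2
  add_left f g h := by simp
  smul_left f g r := by simp [mul_comm]

theorem inner_map_eq_zero_of_inner_map_self_eq_zero
    (hsymm : ∀ f g : G, inner ℂ (Θ f) (g : H) = inner ℂ (f : H) (Θ g))
    (hpos : ∀ f : G, Θ f ∈ G → 0 ≤ (inner ℂ (f : H) (Θ f)).re)
    {f g : G} (hf : Θ f ∈ G) (hg : Θ g ∈ G) (hf0 : inner ℂ (f : H) (Θ f) = 0) :
    inner ℂ (f : H) (Θ g) = 0 :=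
  (symmFormCore hsymm hpos).inner_eq_zero_of_inner_self_eq_zero (x := ⟨f, hf⟩) hf0 ⟨g, hg⟩

variable {φ Ψ : ℕ → G}

theorem inner_map_self_eq_tsum_normSq
    (hquasi : ∀ f g : G,
      inner ℂ (f : H) (g : H) = ∑' n, inner ℂ (f : H) (Ψ n : H) * inner ℂ (φ n : H) (g : H))
    (hsymm : ∀ f g : G, inner ℂ (Θ f) (g : H) = inner ℂ (f : H) (Θ g))
    (hΨΘ : ∀ n, (Ψ n : H) = Θ (φ n)) {f : G} (hf : Θ f ∈ G) :
    inner ℂ (f : H) (Θ f) = ((∑' n, Complex.normSq (inner ℂ (f : H) (Ψ n : H)) : ℝ) : ℂ) := by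
  rw [Complex.ofReal_tsum]
  refine (hquasi f ⟨Θ f, hf⟩).trans (tsum_congr fun n => ?_)
  rw [← Complex.mul_conj, inner_conj_symm, hΨΘ, hsymm]

theorem re_inner_map_self_nonneg
    (hquasi : ∀ f g : G,
      inner ℂ (f : H) (g : H) = ∑' n, inner ℂ (f : H) (Ψ n : H) * inner ℂ (φ n : H) (g : H))
    (hsymm : ∀ f g : G, inner ℂ (Θ f) (g : H) = inner ℂ (f : H) (Θ g))
    (hΨΘ : ∀ n, (Ψ n : H) = Θ (φ n)) {f : G} (hf : Θ f ∈ G) :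
    0 ≤ (inner ℂ (f : H) (Θ f)).re := by
  rw [inner_map_self_eq_tsum_normSq hquasi hsymm hΨΘ hf, Complex.ofReal_re]
  exact tsum_nonneg fun n => Complex.normSq_nonneg _

end LinearMap

theorem Submodule.eq_zero_of_inner_eq_zero_of_quasiBasis {H : Type*} [NormedAddCommGroup H]
    [InnerProductSpace ℂ H] {G : Submodule ℂ H} (hdense : Dense (G : Set H)) {φ Ψ : ℕ → G}
    (hquasi : ∀ f g : G,
      inner ℂ (f : H) (g : H) = ∑' n, inner ℂ (f : H) (Ψ n : H) * inner ℂ (φ n : H) (g : H))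
    {f : G} (hf : ∀ n, inner ℂ (f : H) (Ψ n : H) = 0) : f = 0 := by
  refine Subtype.ext (hdense.eq_zero_of_inner_left (𝕜 := ℂ) fun g hg => ?_)
  simp [hquasi f ⟨g, hg⟩, hf]

theorem theta_positivity_general
    {H : Type*} [NormedAddCommGroup H] [InnerProductSpace ℂ H]
    (G : Submodule ℂ H) (hdense : Dense (G : Set H))
    (φ Ψ : ℕ → G)
    (hquasi1 : ∀ f g : G, (inner ℂ (f : H) (g : H) : ℂ)
      = ∑' n : ℕ, (inner ℂ (f : H) ((Ψ n : H)) : ℂ) * (inner ℂ ((φ n : H)) (g : H) : ℂ))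
    (Θ : G →ₗ[ℂ] H)
    (hΘsym : ∀ f g : G, (inner ℂ (Θ f) (g : H) : ℂ) = inner ℂ (f : H) (Θ g))
    (hΨΘ : ∀ n : ℕ, (Ψ n : H) = Θ (φ n)) :
    ∀ f : G, f ≠ 0 → Θ f ∈ G → ∃ r : ℝ, 0 < r ∧ (inner ℂ (f : H) (Θ f) : ℂ) = (r : ℂ) := by
  intro f hf0 hf
  have hform := LinearMap.inner_map_self_eq_tsum_normSq hquasi1 hΘsym hΨΘ hf
  refine ⟨_, (tsum_nonneg fun n => Complex.normSq_nonneg _).lt_of_ne fun hzero => hf0 ?_, hform⟩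
  have hq : inner ℂ (f : H) (Θ f) = 0 := by rw [hform, ← hzero, Complex.ofReal_zero]
  refine G.eq_zero_of_inner_eq_zero_of_quasiBasis hdense hquasi1 fun n => ?_
  rw [hΨΘ]
  exact LinearMap.inner_map_eq_zero_of_inner_map_self_eq_zero hΘsym
    (fun _ => LinearMap.re_inner_map_self_nonneg hquasi1 hΘsym hΨΘ) hf (hΨΘ n ▸ (Ψ n).2) hq

/-- If `(φₙ)` and `(Ψₙ)` are `G`-quasi bases for a dense subspace
`G` of a complex Hilbert space, `Θ : G → H` is a symmetric linear map with
`Ψₙ = Θ φₙ` for all `n`, then for every nonzero `f ∈ G` with `Θ f ∈ G`, the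
inner product `⟨f, Θ f⟩` is a strictly positive real number. -/
theorem theta_positivity
    {H : Type*} [NormedAddCommGroup H] [InnerProductSpace ℂ H] [CompleteSpace H]
    (G : Submodule ℂ H) (hdense : Dense (G : Set H))
    (φ Ψ : ℕ → G)
    (hquasi1 : ∀ f g : G, (inner ℂ (f : H) (g : H) : ℂ)
      = ∑' n : ℕ, (inner ℂ (f : H) ((Ψ n : H)) : ℂ) * (inner ℂ ((φ n : H)) (g : H) : ℂ))
    (hquasi2 : ∀ f g : G, (inner ℂ (f : H) (g : H) : ℂ)
      = ∑' n : ℕ, (inner ℂ (f : H) ((φ n : H)) : ℂ) * (inner ℂ ((Ψ n : H)) (g : H) : ℂ))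
    (Θ : G →ₗ[ℂ] H)
    (hΘsym : ∀ f g : G, (inner ℂ (Θ f) (g : H) : ℂ) = inner ℂ (f : H) (Θ g))
    (hΨΘ : ∀ n : ℕ, (Ψ n : H) = Θ (φ n)) :
    ∀ f : G, f ≠ 0 → Θ f ∈ G → ∃ r : ℝ, 0 < r ∧ (inner ℂ (f : H) (Θ f) : ℂ) = (r : ℂ) :=
  theta_positivity_general G hdense φ Ψ hquasi1 Θ hΘsym hΨΘ
end

section
/- For all f, g ∈ D that also lie in the range of T (i.e. f = T f′ and g = T g′ for some f′, g′ ∈ D), one has the weak resolutions of the identity ⟨f, g⟩ = ∑ₙ ⟨f, cₙ⟩⟨dₙ, g⟩ and ⟨f, g⟩ = ∑ₙ ⟨f, dₙ⟩⟨cₙ, g⟩, the series converging in ℂ. In other words, (cₙ) and (dₙ) are (D ∩ range T)-quasi bases. (Proposition 2.3 (iv).) -/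
/-!
Symmetry of `T` moves `T` from one side of an inner product to the other, turning
`⟨f, cₙ⟩⟨dₙ, g⟩` into `⟨T f, eₙ⟩⟨eₙ, g'⟩` when `g = T g'`, and `⟨f, dₙ⟩⟨cₙ, g⟩` into
`⟨f', eₙ⟩⟨eₙ, T g⟩` when `f = T f'`. Both series are then Parseval's identity for the
Hilbert basis `(eₙ)`, with sums `⟨T f, g'⟩ = ⟨f, T g'⟩` and `⟨f', T g⟩ = ⟨T f', g⟩`.
-/

open scoped InnerProductSpace

theorem HilbertBasis.tsum_inner_mul_inner_of_eq {ι 𝕜 E : Type*} [RCLike 𝕜]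
    [NormedAddCommGroup E] [InnerProductSpace 𝕜 E] (b : HilbertBasis ι 𝕜 E)
    {x y a a' : E} {u v : ι → E}
    (hu : ∀ i, ⟪x, u i⟫_𝕜 = ⟪a, b i⟫_𝕜) (hv : ∀ i, ⟪v i, y⟫_𝕜 = ⟪b i, a'⟫_𝕜) :
    ∑' i, ⟪x, u i⟫_𝕜 * ⟪v i, y⟫_𝕜 = ⟪a, a'⟫_𝕜 := by
  simp_rw [hu, hv]
  exact b.tsum_inner_mul_inner a a'

theorem c_d_quasi_bases_general
    {H : Type*} [NormedAddCommGroup H] [InnerProductSpace ℂ H]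
    (e : HilbertBasis ℕ ℂ H)
    (D : Submodule ℂ H) (he : ∀ n : ℕ, e n ∈ D)
    (T : D →ₗ[ℂ] H)
    (hsym : ∀ f g : D, (inner ℂ (T f) (g : H) : ℂ) = inner ℂ (f : H) (T g))
    (d : ℕ → D) (hd : ∀ n : ℕ, T (d n) = e n)
    (c : ℕ → H) (hc : ∀ n : ℕ, c n = T ⟨e n, he n⟩) :
    ∀ f g : D, (∃ f' : D, T f' = (f : H)) → (∃ g' : D, T g' = (g : H)) →
      (inner ℂ (f : H) (g : H) : ℂ)
          = ∑' n : ℕ, (inner ℂ (f : H) (c n) : ℂ) * (inner ℂ ((d n : H)) (g : H) : ℂ) ∧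
      (inner ℂ (f : H) (g : H) : ℂ)
          = ∑' n : ℕ, (inner ℂ (f : H) ((d n : H)) : ℂ) * (inner ℂ (c n) (g : H) : ℂ) := by
  rintro f g ⟨f', hf'⟩ ⟨g', hg'⟩
  constructor
  · rw [e.tsum_inner_mul_inner_of_eq (a := T f) (a' := g'), hsym, hg']
    · intro n
      rw [hc, ← hsym]
    · intro n
      rw [← hg', ← hsym, hd]
  · rw [e.tsum_inner_mul_inner_of_eq (a := f') (a' := T g), ← hsym, hf']
    · intro n
      rw [← hf', hsym, hd]
    · intro n
      rw [hc, hsym]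

/-- Proposition 2.3 (iv): With `(eₙ)` an orthonormal (Hilbert)
basis contained in the subspace `D`, `T : D → H` an injective symmetric linear
map, `cₙ := T eₙ` and `dₙ ∈ D` with `T dₙ = eₙ`, the families `(cₙ)` and `(dₙ)`
are `(D ∩ range T)`-quasi bases: for all `f, g ∈ D` lying in the range of `T`,
`⟨f, g⟩ = ∑ₙ ⟨f, cₙ⟩⟨dₙ, g⟩ = ∑ₙ ⟨f, dₙ⟩⟨cₙ, g⟩`. -/
theorem c_d_quasi_bases
    {H : Type*} [NormedAddCommGroup H] [InnerProductSpace ℂ H] [CompleteSpace H]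
    (e : HilbertBasis ℕ ℂ H)
    (D : Submodule ℂ H) (he : ∀ n : ℕ, e n ∈ D)
    (T : D →ₗ[ℂ] H) (hinj : Function.Injective T)
    (hsym : ∀ f g : D, (inner ℂ (T f) (g : H) : ℂ) = inner ℂ (f : H) (T g))
    (d : ℕ → D) (hd : ∀ n : ℕ, T (d n) = e n)
    (c : ℕ → H) (hc : ∀ n : ℕ, c n = T ⟨e n, he n⟩) :
    ∀ f g : D, (∃ f' : D, T f' = (f : H)) → (∃ g' : D, T g' = (g : H)) →
      (inner ℂ (f : H) (g : H) : ℂ)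
          = ∑' n : ℕ, (inner ℂ (f : H) (c n) : ℂ) * (inner ℂ ((d n : H)) (g : H) : ℂ) ∧
      (inner ℂ (f : H) (g : H) : ℂ)
          = ∑' n : ℕ, (inner ℂ (f : H) ((d n : H)) : ℂ) * (inner ℂ (c n) (g : H) : ℂ) :=
  c_d_quasi_bases_general e D he T hsym d hd c hc
end

section
/- Let ε ∈ (−1,1) and ξ ∈ {−1,1}. Set α₊ := (√(1+εξ) + √(1−εξ))/2, α₋ := (√(1+εξ) − √(1−εξ))/2, k₋ := −iξα₋/√(1−ε²), k₊ := iα₊/√(1−ε²), and define φ₀₀(x₁,x₂) := exp(−(α₊/2)(x₁² + x₂²) − k₋x₁ − k₊x₂ − ξα₋ x₁x₂). Then φ₀₀ is a Schwartz function on ℝ² with values in ℂ, and it is annihilated by the two first-order differential operators a₁ and a₂: for all (x₁,x₂) ∈ ℝ², ∂₁φ₀₀ + ξ ∂₂φ₀₀ + (√(1+εξ)(x₁ + ξx₂) + iξ/√(1+εξ)) φ₀₀ = 0 and ∂₁φ₀₀ − ξ ∂₂φ₀₀ + (√(1−εξ)(x₁ − ξx₂) − iξ/√(1−εξ)) φ₀₀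 = 0. -/
/-- Partial derivative in the first variable of a function `ℝ × ℝ → ℂ`. -/
noncomputable def pd1 (f : ℝ × ℝ → ℂ) (x : ℝ × ℝ) : ℂ :=
  deriv (fun t : ℝ => f (t, x.2)) x.1

/-- Partial derivative in the second variable of a function `ℝ × ℝ → ℂ`. -/
noncomputable def pd2 (f : ℝ × ℝ → ℂ) (x : ℝ × ℝ) : ℂ :=
  deriv (fun t : ℝ => f (x.1, t)) x.2

/-!
`φ₀₀ = exp ∘ P` for a complex quadratic polynomial `P` whose real part is the negative definite
form `-(α₊/2)|x|² - ξα₋x₁x₂ ≤ -((α₊ - |α₋|)/2)|x|²`. By Faà di Bruno, the derivatives of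
`exp ∘ P` are bounded by a polynomial times `exp (Re P)`, so the Gaussian decay of `exp (Re P)`
makes `φ₀₀` a Schwartz function. Since `∂ⱼφ₀₀ = (∂ⱼP) φ₀₀`, the annihilation identities reduce to
identities between affine functions of `x`, which follow from `α₊ ± α₋ = √(1 ± εξ)` and
`√(1 - ε²) = √(1 + εξ) √(1 - εξ)`.
-/

open scoped SchwartzMap

theorem Complex.norm_iteratedFDeriv_real_exp (n : ℕ) (z : ℂ) :
    ‖iteratedFDeriv ℝ n Complex.exp z‖ = Real.exp z.re := by
  have hexp : ContDiffAt ℂ n Complex.exp z := Complex.contDiff_exp.contDiffAt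
  rw [← hexp.restrictScalars_iteratedFDeriv (𝕜 := ℝ), Function.comp_apply,
    ContinuousMultilinearMap.norm_restrictScalars, norm_iteratedFDeriv_eq_norm_iteratedDeriv,
    iteratedDeriv_eq_iterate, Complex.iter_deriv_exp, Complex.norm_exp]

theorem one_add_pow_mul_exp_neg_mul_sq_le {δ : ℝ} (hδ : 0 < δ) (m : ℕ) {t : ℝ} (ht : 0 ≤ t) :
    (1 + t) ^ m * Real.exp (-δ * t ^ 2) ≤ Real.exp (m ^ 2 / (4 * δ)) := by
  have hpow : (1 + t) ^ m ≤ Real.exp (m * t) := by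
    rw [Real.exp_nat_mul]
    gcongr
    linarith [Real.add_one_le_exp t]
  calc (1 + t) ^ m * Real.exp (-δ * t ^ 2) ≤ Real.exp (m * t) * Real.exp (-δ * t ^ 2) := by
        gcongr
    _ = Real.exp (m * t - δ * t ^ 2) := by rw [← Real.exp_add]; ring_nf
    _ ≤ Real.exp (m ^ 2 / (4 * δ)) := by
        gcongr
        rw [le_div_iff₀ (by positivity)]
        nlinarith [sq_nonneg (2 * δ * t - m)]

theorem SchwartzMap.exists_coe_eq_cexp {E : Type*} [NormedAddCommGroup E] [NormedSpace ℝ E]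
    {P : E → ℂ} (hP : P.HasTemperateGrowth) {C δ : ℝ} (hδ : 0 < δ)
    (hre : ∀ x, (P x).re ≤ C - δ * ‖x‖ ^ 2) :
    ∃ Φ : 𝓢(E, ℂ), ⇑Φ = fun x => Complex.exp (P x) := by
  refine ⟨⟨fun x => Complex.exp (P x), Complex.contDiff_exp.comp hP.1, fun m n => ?_⟩, rfl⟩
  obtain ⟨k, A, hA, hPbound⟩ := hP.norm_iteratedFDeriv_le_uniform n
  refine ⟨n.factorial * (A + 1) ^ n * Real.exp C * Real.exp ((m + k * n : ℕ) ^ 2 / (4 * δ)),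
    fun x => ?_⟩
  set D := (A + 1) * (1 + ‖x‖) ^ k
  have hD : 1 ≤ D := one_le_mul_of_one_le_of_one_le (by linarith) (one_le_pow₀ (by simp))
  have hcomp :
      ‖iteratedFDeriv ℝ n (Complex.exp ∘ P) x‖ ≤ n.factorial * Real.exp (P x).re * D ^ n := by
    refine norm_iteratedFDeriv_comp_le Complex.contDiff_exp hP.1 (mod_cast le_top) x
      (fun i _ => (Complex.norm_iteratedFDeriv_real_exp i _).le) fun i _ hin => ?_
    calc ‖iteratedFDeriv ℝ i P x‖ ≤ A * (1 + ‖x‖) ^ k := hPbound i hin x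
      _ ≤ D := by unfold D; gcongr; linarith
      _ ≤ D ^ i := le_self_pow₀ hD (by omega)
  have hexp : Real.exp (P x).re ≤ Real.exp C * Real.exp (-δ * ‖x‖ ^ 2) := by
    rw [← Real.exp_add, Real.exp_le_exp]; linarith [hre x]
  calc ‖x‖ ^ m * ‖iteratedFDeriv ℝ n (fun x => Complex.exp (P x)) x‖
      ≤ (1 + ‖x‖) ^ m * (n.factorial * (Real.exp C * Real.exp (-δ * ‖x‖ ^ 2)) * D ^ n) := by
        gcongr
        · simp
        · exact hcomp.trans (by gcongr)
    _ = n.factorial * (A + 1) ^ n * Real.exp C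
          * ((1 + ‖x‖) ^ (m + k * n) * Real.exp (-δ * ‖x‖ ^ 2)) := by
        rw [pow_add, pow_mul, mul_pow]; ring
    _ ≤ _ := by gcongr; exact one_add_pow_mul_exp_neg_mul_sq_le hδ _ (norm_nonneg x)

noncomputable def cexpQuadratic (a b c d : ℂ) (x : ℝ × ℝ) : ℂ :=
  Complex.exp (a * ((x.1 : ℂ) ^ 2 + (x.2 : ℂ) ^ 2) + b * x.1 + c * x.2 + d * x.1 * x.2)

theorem hasDerivAt_cexp_quadratic (A B C : ℂ) (t : ℝ) :
    HasDerivAt (fun t : ℝ => Complex.exp (A * t ^ 2 + B * t + C))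
      ((2 * A * t + B) * Complex.exp (A * t ^ 2 + B * t + C)) t := by
  have hpoly : HasDerivAt (fun z : ℂ => A * z ^ 2 + B * z + C) (2 * A * t + B) t := by
    refine ((((hasDerivAt_pow 2 (t : ℂ)).const_mul A).add
      ((hasDerivAt_id (t : ℂ)).const_mul B)).add_const C).congr_deriv ?_
    norm_num; ring
  simpa [mul_comm] using hpoly.comp_ofReal.cexp

theorem pd1_cexpQuadratic (a b c d : ℂ) (x₁ x₂ : ℝ) :
    pd1 (cexpQuadratic a b c d) (x₁, x₂)
      = (2 * a * x₁ + b + d * x₂) * cexpQuadratic a b c d (x₁, x₂) := by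
  have hslice (t : ℝ) : cexpQuadratic a b c d (t, x₂)
      = Complex.exp (a * t ^ 2 + (b + d * x₂) * t + (a * x₂ ^ 2 + c * x₂)) := by
    unfold cexpQuadratic; ring_nf
  simp only [pd1, hslice, (hasDerivAt_cexp_quadratic _ _ _ x₁).deriv]
  ring

theorem pd2_cexpQuadratic (a b c d : ℂ) (x₁ x₂ : ℝ) :
    pd2 (cexpQuadratic a b c d) (x₁, x₂)
      = (2 * a * x₂ + c + d * x₁) * cexpQuadratic a b c d (x₁, x₂) := by
  have hslice (t : ℝ) : cexpQuadratic a b c d (x₁, t)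
      = Complex.exp (a * t ^ 2 + (c + d * x₁) * t + (a * x₁ ^ 2 + b * x₁)) := by
    unfold cexpQuadratic; ring_nf
  simp only [pd2, hslice, (hasDerivAt_cexp_quadratic _ _ _ x₂).deriv]
  ring

theorem Prod.norm_sq_le_fst_sq_add_snd_sq (x : ℝ × ℝ) : ‖x‖ ^ 2 ≤ x.1 ^ 2 + x.2 ^ 2 := by
  rw [Prod.norm_def, Real.norm_eq_abs, Real.norm_eq_abs]
  rcases le_total |x.1| |x.2| with h | h
  · rw [max_eq_right h, sq_abs]; nlinarith
  · rw [max_eq_left h, sq_abs]; nlinarith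

theorem exists_schwartzMap_coe_eq_cexpQuadratic {a b c d : ℂ} (hb : b.re = 0) (hc : c.re = 0)
    (had : |d.re| < -2 * a.re) : ∃ Φ : 𝓢(ℝ × ℝ, ℂ), ⇑Φ = cexpQuadratic a b c d := by
  have h₁ : (fun x : ℝ × ℝ => (x.1 : ℂ)).HasTemperateGrowth :=
    (Complex.ofRealCLM.comp (ContinuousLinearMap.fst ℝ ℝ ℝ)).hasTemperateGrowth
  have h₂ : (fun x : ℝ × ℝ => (x.2 : ℂ)).HasTemperateGrowth :=
    (Complex.ofRealCLM.comp (ContinuousLinearMap.snd ℝ ℝ ℝ)).hasTemperateGrowth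
  refine SchwartzMap.exists_coe_eq_cexp (C := 0) (δ := -(a.re + |d.re| / 2)) (by fun_prop)
    (by linarith) fun x => ?_
  have hre : (a * ((x.1 : ℂ) ^ 2 + (x.2 : ℂ) ^ 2) + b * x.1 + c * x.2 + d * x.1 * x.2).re
      = a.re * (x.1 ^ 2 + x.2 ^ 2) + d.re * (x.1 * x.2) := by
    simp only [pow_two, Complex.add_re, Complex.mul_re, Complex.ofReal_re, Complex.ofReal_im,
      Complex.add_im, Complex.mul_im, hb, hc]
    ring
  have hcross : d.re * (x.1 * x.2) ≤ |d.re| / 2 * (x.1 ^ 2 + x.2 ^ 2) := by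
    have hle : 0 ≤ |d.re| - d.re := by linarith [le_abs_self d.re]
    have hge : 0 ≤ |d.re| + d.re := by linarith [neg_abs_le d.re]
    nlinarith [mul_nonneg hle (sq_nonneg (x.1 + x.2)), mul_nonneg hge (sq_nonneg (x.1 - x.2))]
  have hnorm := x.norm_sq_le_fst_sq_add_snd_sq
  rw [hre]
  nlinarith

theorem cexpQuadratic_annihilated {ξ sp sm αp αm : ℝ} {km kp : ℂ} {φ : ℝ × ℝ → ℂ}
    (hξ : ξ = -1 ∨ ξ = 1) (hsp : sp ≠ 0) (hsm : sm ≠ 0)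
    (hαp : αp = (sp + sm) / 2) (hαm : αm = (sp - sm) / 2)
    (hkm : km = -Complex.I * ξ * αm / ((sp * sm : ℝ) : ℂ))
    (hkp : kp = Complex.I * αp / ((sp * sm : ℝ) : ℂ))
    (hφ : φ = cexpQuadratic (-((αp / 2 : ℝ) : ℂ)) (-km) (-kp) (-((ξ * αm : ℝ) : ℂ))) :
    (∀ x₁ x₂ : ℝ, pd1 φ (x₁, x₂) + ξ * pd2 φ (x₁, x₂)
      + (((sp * (x₁ + ξ * x₂) : ℝ) : ℂ) + Complex.I * ξ / (sp : ℂ)) * φ (x₁, x₂) = 0) ∧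
    (∀ x₁ x₂ : ℝ, pd1 φ (x₁, x₂) - ξ * pd2 φ (x₁, x₂)
      + (((sm * (x₁ - ξ * x₂) : ℝ) : ℂ) - Complex.I * ξ / (sm : ℂ)) * φ (x₁, x₂) = 0) := by
  have hspC : (sp : ℂ) ≠ 0 := mod_cast hsp
  have hsmC : (sm : ℂ) ≠ 0 := mod_cast hsm
  subst hφ hkm hkp hαp hαm
  refine ⟨fun x₁ x₂ => ?_, fun x₁ x₂ => ?_⟩ <;>
  · rw [pd1_cexpQuadratic, pd2_cexpQuadratic]
    generalize cexpQuadratic _ _ _ _ (x₁, x₂) = G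
    rcases hξ with rfl | rfl <;> push_cast <;> field_simp <;> ring

/-- Example one, vacuum: the function
`φ₀₀(x₁,x₂) = exp(−(α₊/2)(x₁²+x₂²) − k₋x₁ − k₊x₂ − ξα₋x₁x₂)` is a Schwartz
function on `ℝ²` and is annihilated by the differential operators `a₁, a₂`. -/
theorem example_one_vacuum
    (ε ξ : ℝ) (hε : ε ∈ Set.Ioo (-1 : ℝ) 1) (hξ : ξ = -1 ∨ ξ = 1)
    (αp αm : ℝ) (km kp : ℂ)
    (hαp : αp = (Real.sqrt (1 + ε * ξ) + Real.sqrt (1 - ε * ξ)) / 2)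
    (hαm : αm = (Real.sqrt (1 + ε * ξ) - Real.sqrt (1 - ε * ξ)) / 2)
    (hkm : km = -Complex.I * (ξ : ℂ) * (αm : ℂ) / ((Real.sqrt (1 - ε ^ 2) : ℝ) : ℂ))
    (hkp : kp = Complex.I * (αp : ℂ) / ((Real.sqrt (1 - ε ^ 2) : ℝ) : ℂ))
    (φ : ℝ × ℝ → ℂ)
    (hφ : ∀ x₁ x₂ : ℝ, φ (x₁, x₂) = Complex.exp
      (-((αp / 2 : ℝ) : ℂ) * ((x₁ : ℂ) ^ 2 + (x₂ : ℂ) ^ 2)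
        - km * (x₁ : ℂ) - kp * (x₂ : ℂ)
        - ((ξ * αm : ℝ) : ℂ) * (x₁ : ℂ) * (x₂ : ℂ))) :
    (∃ Φ : SchwartzMap (ℝ × ℝ) ℂ, ⇑Φ = φ) ∧
    (∀ x₁ x₂ : ℝ,
      pd1 φ (x₁, x₂) + (ξ : ℂ) * pd2 φ (x₁, x₂)
        + (((Real.sqrt (1 + ε * ξ) * (x₁ + ξ * x₂) : ℝ) : ℂ)
            + Complex.I * (ξ : ℂ) / ((Real.sqrt (1 + ε * ξ) : ℝ) : ℂ)) * φ (x₁, x₂) = 0) ∧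
    (∀ x₁ x₂ : ℝ,
      pd1 φ (x₁, x₂) - (ξ : ℂ) * pd2 φ (x₁, x₂)
        + (((Real.sqrt (1 - ε * ξ) * (x₁ - ξ * x₂) : ℝ) : ℂ)
            - Complex.I * (ξ : ℂ) / ((Real.sqrt (1 - ε * ξ) : ℝ) : ℂ)) * φ (x₁, x₂) = 0) := by
  obtain ⟨hε₁, hε₂⟩ := hε
  have hp : 0 < 1 + ε * ξ := by rcases hξ with rfl | rfl <;> linarith
  have hm : 0 < 1 - ε * ξ := by rcases hξ with rfl | rfl <;> linarith
  have hs : Real.sqrt (1 - ε ^ 2) = Real.sqrt (1 + ε * ξ) * Real.sqrt (1 - ε * ξ) := by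
    rw [← Real.sqrt_mul hp.le]
    congr 1
    rcases hξ with rfl | rfl <;> ring
  have hφ' : φ = cexpQuadratic (-((αp / 2 : ℝ) : ℂ)) (-km) (-kp) (-((ξ * αm : ℝ) : ℂ)) := by
    ext ⟨x₁, x₂⟩
    rw [hφ, cexpQuadratic]
    ring_nf
  have hαm_lt : |ξ * αm| < αp := by
    have hξabs : |ξ| = 1 := by rcases hξ with rfl | rfl <;> norm_num
    rw [abs_mul, hξabs, one_mul, hαp, hαm, abs_lt]
    constructor <;> linarith [Real.sqrt_pos.2 hp, Real.sqrt_pos.2 hm]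
  refine ⟨?_, cexpQuadratic_annihilated hξ (Real.sqrt_pos.2 hp).ne' (Real.sqrt_pos.2 hm).ne'
    hαp hαm (hs ▸ hkm) (hs ▸ hkp) hφ'⟩
  rw [hφ']
  exact exists_schwartzMap_coe_eq_cexpQuadratic (by simp [hkm]) (by simp [hkp])
    (by simp only [Complex.neg_re, Complex.ofReal_re, abs_neg]; linarith)
end

section
/- Let A be an associative unital ℂ-algebra containing elements x₁, x₂, p₁, p₂ with [x₁,p₁] = [x₂,p₂] = i·1 and [x₁,x₂] = [p₁,p₂] = [x₁,p₂] = [x₂,p₁] = 0, where [u,v] := uv − vu. Let A, B ∈ ℝ, set C := iA − B and D := iA + B, and define aⱼ := (1/√2)(xⱼ + i pⱼ + C·1) and bⱼ := (1/√2)(xⱼ − i pⱼ + D·1) for j = 1, 2. Then [a₁,b₁] = [a₂,b₂] = 1, [a₁,b₂] = [a₂,b₁] = [a₁,a₂] = [b₁,b₂] = 0, and the Hamiltonian H := (1/2)(p₁² + x₁²) + (1/2)(p₂² + x₂²) + i(A(x₁ + x₂) + B(p₁ + p₂)) satisfies H = b₁a₁ + b₂a₂ + (A² + B² + 1)·1.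 -/
/-- Example two: In a unital ℂ-algebra with canonical pairs
`(x₁,p₁), (x₂,p₂)`, the operators `aⱼ = (1/√2)(xⱼ + ipⱼ + C)` and
`bⱼ = (1/√2)(xⱼ − ipⱼ + D)` with `C = iA − B`, `D = iA + B` satisfy the
pseudo-bosonic commutation rules, and the Hamiltonian
`H = (1/2)(p₁²+x₁²) + (1/2)(p₂²+x₂²) + i(A(x₁+x₂) + B(p₁+p₂))` equals
`b₁a₁ + b₂a₂ + (A²+B²+1)·1`. -/
theorem example_two_pseudo_bosons
    {A : Type*} [Ring A] [Algebra ℂ A]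
    (x₁ x₂ p₁ p₂ : A)
    (h1 : x₁ * p₁ - p₁ * x₁ = Complex.I • (1 : A))
    (h2 : x₂ * p₂ - p₂ * x₂ = Complex.I • (1 : A))
    (hxx : x₁ * x₂ - x₂ * x₁ = 0) (hpp : p₁ * p₂ - p₂ * p₁ = 0)
    (h12 : x₁ * p₂ - p₂ * x₁ = 0) (h21 : x₂ * p₁ - p₁ * x₂ = 0)
    (A₀ B₀ : ℝ) (C D : ℂ)
    (hC : C = Complex.I * (A₀ : ℂ) - (B₀ : ℂ)) (hD : D = Complex.I * (A₀ : ℂ) + (B₀ : ℂ))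
    (a₁ a₂ b₁ b₂ H : A)
    (ha₁ : a₁ = ((1 / Real.sqrt 2 : ℝ) : ℂ) • (x₁ + Complex.I • p₁ + C • (1 : A)))
    (ha₂ : a₂ = ((1 / Real.sqrt 2 : ℝ) : ℂ) • (x₂ + Complex.I • p₂ + C • (1 : A)))
    (hb₁ : b₁ = ((1 / Real.sqrt 2 : ℝ) : ℂ) • (x₁ - Complex.I • p₁ + D • (1 : A)))
    (hb₂ : b₂ = ((1 / Real.sqrt 2 : ℝ) : ℂ) • (x₂ - Complex.I • p₂ + D • (1 : A)))
    (hH : H = ((1 / 2 : ℝ) : ℂ) • (p₁ ^ 2 + x₁ ^ 2) + ((1 / 2 : ℝ) : ℂ) • (p₂ ^ 2 + x₂ ^ 2)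
        + Complex.I • ((A₀ : ℂ) • (x₁ + x₂) + (B₀ : ℂ) • (p₁ + p₂))) :
    (a₁ * b₁ - b₁ * a₁ = 1) ∧ (a₂ * b₂ - b₂ * a₂ = 1) ∧
    (a₁ * b₂ - b₂ * a₁ = 0) ∧ (a₂ * b₁ - b₁ * a₂ = 0) ∧
    (a₁ * a₂ - a₂ * a₁ = 0) ∧ (b₁ * b₂ - b₂ * b₁ = 0) ∧
    H = b₁ * a₁ + b₂ * a₂ + ((A₀ ^ 2 + B₀ ^ 2 + 1 : ℝ) : ℂ) • (1 : A) := by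
  have hxp1 : x₁ * p₁ = Complex.I • (1:A) + p₁ * x₁ := by rw [← h1]; abel
  have hxp2 : x₂ * p₂ = Complex.I • (1:A) + p₂ * x₂ := by rw [← h2]; abel
  have hxx' : x₂ * x₁ = x₁ * x₂ := (sub_eq_zero.mp hxx).symm
  have hpp' : p₂ * p₁ = p₁ * p₂ := (sub_eq_zero.mp hpp).symm
  have h12' : p₂ * x₁ = x₁ * p₂ := (sub_eq_zero.mp h12).symm
  have h21' : x₂ * p₁ = p₁ * x₂ := sub_eq_zero.mp h21
  set s : ℂ := ((1 / Real.sqrt 2 : ℝ) : ℂ) with hsdef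
  have hs : s * s = 1/2 := by
    rw [hsdef, ← Complex.ofReal_mul]
    rw [show (1/Real.sqrt 2) * (1/Real.sqrt 2) = (1:ℝ)/2 by
      rw [div_mul_div_comm, Real.mul_self_sqrt (by norm_num)]; norm_num]
    push_cast; ring
  subst ha₁ ha₂ hb₁ hb₂ hH hC hD
  refine ⟨?_, ?_, ?_, ?_, ?_, ?_, ?_⟩ <;>
    simp only [pow_two, mul_add, add_mul, mul_sub, sub_mul, smul_mul_assoc,
      mul_smul_comm, smul_smul, one_mul, mul_one, smul_add, smul_sub,
      hxp1, hxp2, hxx', hpp', h12', h21'] <;>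
    match_scalars <;>
    (ring_nf; try simp only [Complex.I_sq, sq, hs]; try norm_num; try ring_nf)
end
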